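/- There exists a constant c > 0 such that for every natural number n ≥ 1, the Lebesgue measure of the set of angles θ ∈ [0,π) for which |proj_θ(K_n)| ≥ c/n is at least π/2; in other words, the median over θ ∈ [0,π) of the projection length |proj_θ(K_n)| is at least c/n. -/

import Mathlib

open MeasureTheory Real Set

noncomputable section

/-- Digit value: `false ↦ 0`, `true ↦ 3`. -/
def dig (b : Bool) : ℝ := if b then 3 else 0

/-- Left endpoint `x_a = ∑ a_j 4^{-j}` of the interval coded by the word `a ∈ {0,3}^n`. -/
def cantorX {n : ℕ} (a : Fin n → Bool) : ℝ :=
  ∑ j : Fin n, dig (a j) * (4 : ℝ) ^ (-((j : ℕ) + 1) : ℤ)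

/-- The `n`-th generation `C_n` of the middle-half Cantor set. -/
def cantorC (n : ℕ) : Set ℝ :=
  ⋃ a : Fin n → Bool, Icc (cantorX a) (cantorX a + (4 : ℝ) ^ (-(n : ℤ)))

/-- The `n`-th generation `K_n = C_n × C_n` of the four-corner Cantor set. -/
def cantorK (n : ℕ) : Set (ℝ × ℝ) := cantorC n ×ˢ cantorC n

/-- The square `Q_{a,b}` of side `4^{-n}` of the `n`-th generation. -/
def cantorSq {n : ℕ} (a b : Fin n → Bool) : Set (ℝ × ℝ) :=
  Icc (cantorX a) (cantorX a + (4 : ℝ) ^ (-(n : ℤ))) ×ˢ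
    Icc (cantorX b) (cantorX b + (4 : ℝ) ^ (-(n : ℤ)))

/-- Orthogonal projection in direction `θ`: `proj_θ (x, y) = x cos θ + y sin θ`. -/
def projAngle (θ : ℝ) (p : ℝ × ℝ) : ℝ := p.1 * Real.cos θ + p.2 * Real.sin θ

/-- The Favard length of a planar set. -/
def favard (E : Set (ℝ × ℝ)) : ℝ :=
  (1 / π) * ∫ θ in (0 : ℝ)..π, (volume (projAngle θ '' E)).toReal

end

/-!
Let `δ = 4⁻ⁿ` and let `Q(θ)` count the ordered pairs of the `4ⁿ` squares of `K_n` whose corners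
project under `proj_θ` to within `2δ` of each other. Each square contributes to `proj_θ(K_n)` an
interval of length `≥ δ/2` within `δ` of its projected corner. Sorting the projected corners into
bins of width `2δ`, Cauchy–Schwarz gives at least `16ⁿ / Q(θ)` occupied bins, and the
`δ`-neighbourhoods of bins of equal parity are disjoint; hence `|proj_θ(K_n)| ≥ 4ⁿ / (4 Q(θ))`.

Two squares whose words first differ at position `k` have corners at distance `≥ 2 · 4⁻⁽ᵏ⁺¹⁾`, so
their projections are `2δ`-close only on a set of angles of measure `O(4ᵏ⁻ⁿ)`; summing over pairs,
`∫₀^π Q ≤ π (8n + 1) 4ⁿ`. By Markov's inequality `Q(θ) < 36 n 4ⁿ` on a set of angles of measure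
`≥ π/2`, and there `|proj_θ(K_n)| ≥ 1 / (144 n)`.
-/

open scoped ENNReal Finset

theorem exists_forall_lt_eq_and_ne {ι β : Type*} [LinearOrder ι] [WellFoundedLT ι]
    {u v : ι → β} (h : u ≠ v) : ∃ k, (∀ j < k, u j = v j) ∧ u k ≠ v k := by
  obtain ⟨k, hk, hmin⟩ := wellFounded_lt.has_min {j | u j ≠ v j} (Function.ne_iff.1 h)
  exact ⟨k, fun j hj => not_not.1 fun hne => hmin j hne hj, hk⟩

open Finset in
theorem card_filter_forall_lt_eq {α : Type*} [Fintype α] [DecidableEq α] {n : ℕ}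
    (u : Fin n → α) (k : Fin n) :
    #{v : Fin n → α | ∀ j < k, u j = v j} = Fintype.card α ^ (n - k) := by
  have hpi : ({v : Fin n → α | ∀ j < k, u j = v j} : Finset _) =
      Fintype.piFinset fun j => if j < k then {u j} else univ := by
    ext v
    simp only [mem_filter, Finset.mem_univ, true_and, Fintype.mem_piFinset]
    refine forall_congr' fun j => ?_
    split_ifs <;> simp_all [eq_comm]
  rw [hpi, Fintype.card_piFinset]
  simp only [apply_ite Finset.card, Finset.card_singleton, Finset.card_univ]
  rw [prod_ite, prod_const_one, one_mul, prod_const]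
  congr 1
  rw [← Fin.card_Ici k]
  congr 1
  ext j
  simp

open Finset in
theorem card_sq_le_card_image_mul_card_filter_eq {ι β : Type*} [Fintype ι] [DecidableEq β]
    (f : ι → β) : Fintype.card ι ^ 2 ≤ #(univ.image f) * #{p : ι × ι | f p.1 = f p.2} := by
  have hfib : Fintype.card ι = ∑ b ∈ univ.image f, #{i | f i = b} :=
    card_eq_sum_card_fiberwise fun i _ => mem_image_of_mem f (mem_univ i)
  have hpairs : #{p : ι × ι | f p.1 = f p.2} = ∑ b ∈ univ.image f, #{i | f i = b} ^ 2 := by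
    rw [card_eq_sum_card_fiberwise (f := fun p : ι × ι => f p.1)
      fun p _ => mem_image_of_mem f (mem_univ p.1)]
    refine sum_congr rfl fun b _ => ?_
    rw [sq, ← card_product]
    congr 1
    ext ⟨i, j⟩
    simp only [mem_filter, Finset.mem_univ, true_and, mem_product]
    constructor
    · rintro ⟨hij, rfl⟩
      exact ⟨rfl, hij.symm⟩
    · rintro ⟨hi, hj⟩
      exact ⟨hi.trans hj.symm, hi⟩
  rw [hfib, hpairs]
  exact sq_sum_le_card_mul_sum_sq

theorem measure_univ_sub_lintegral_div_le_measure_lt {α : Type*} [MeasurableSpace α]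
    {μ : Measure α} {f : α → ℝ≥0∞} (hf : AEMeasurable f μ) {T : ℝ≥0∞} (hT0 : T ≠ 0)
    (hT : T ≠ ∞) : μ univ - (∫⁻ x, f x ∂μ) / T ≤ μ {x | f x < T} := by
  rw [tsub_le_iff_right]
  calc μ univ ≤ μ {x | f x < T} + μ {x | f x < T}ᶜ := measure_univ_le_add_compl _
    _ ≤ μ {x | f x < T} + (∫⁻ x, f x ∂μ) / T := by
      gcongr
      simpa only [compl_ofPred, not_lt] using meas_ge_le_lintegral_div hf hT0 hT

open Finset in
theorem natCast_card_eq_sum_indicator {α ι : Type*} [Fintype ι] (s : α → Finset ι) (x : α) :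
    (#(s x) : ℝ≥0∞) = ∑ i, {y | i ∈ s y}.indicator 1 x := by
  rw [card_eq_sum_ones, Nat.cast_sum, ← sum_subset (subset_univ (s x))]
  · refine sum_congr rfl fun i hi => ?_
    rw [Set.indicator_of_mem (by exact hi), Nat.cast_one, Pi.one_apply]
  · intro i _ hi
    rw [Set.indicator_of_notMem (by exact hi)]

theorem disjoint_Ico_of_emod_two_eq {δ : ℝ} (hδ : 0 < δ) {k k' : ℤ} (hne : k ≠ k')
    (hpar : k % 2 = k' % 2) :
    Disjoint (Ico ((2 * k - 1) * δ) ((2 * k + 3) * δ))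
      (Ico ((2 * k' - 1) * δ) ((2 * k' + 3) * δ)) := by
  refine Set.disjoint_left.2 fun x hx hx' => ?_
  have h : (2 * k - 1 : ℝ) < 2 * k' + 3 := lt_of_mul_lt_mul_right (hx.1.trans_lt hx'.2) hδ.le
  have h' : (2 * k' - 1 : ℝ) < 2 * k + 3 := lt_of_mul_lt_mul_right (hx'.1.trans_lt hx.2) hδ.le
  have hk : k < k' + 2 := by exact_mod_cast (by linarith : (k : ℝ) < k' + 2)
  have hk' : k' < k + 2 := by exact_mod_cast (by linarith : (k' : ℝ) < k + 2)
  omega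

open Finset in
theorem card_image_floor_mul_le_two_mul_volume {ι : Type*} [Fintype ι] (z : ι → ℝ) {δ : ℝ}
    (hδ : 0 < δ) {U : Set ℝ} (hU : MeasurableSet U) {ℓ : ℝ≥0∞}
    (hmass : ∀ i, ℓ ≤ volume (U ∩ Metric.closedBall (z i) δ)) :
    #(Finset.univ.image fun i => ⌊z i / (2 * δ)⌋) * ℓ ≤ 2 * volume U := by
  set S := Finset.univ.image fun i => ⌊z i / (2 * δ)⌋
  -- `I k` is the `δ`-neighbourhood of the bin `[2kδ, 2(k+1)δ)`.
  set I : ℤ → Set ℝ := fun k => Ico ((2 * k - 1) * δ) ((2 * k + 3) * δ)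
  have hball : ∀ i, Metric.closedBall (z i) δ ⊆ I ⌊z i / (2 * δ)⌋ := by
    intro i x hx
    rw [Real.closedBall_eq_Icc] at hx
    have h1 := Int.floor_le (z i / (2 * δ))
    have h2 := Int.lt_floor_add_one (z i / (2 * δ))
    rw [le_div_iff₀ (by positivity)] at h1
    rw [div_lt_iff₀ (by positivity)] at h2
    constructor <;> nlinarith [hx.1, hx.2]
  have hmassS : ∀ k ∈ S, ℓ ≤ volume (U ∩ I k) := by
    intro k hk
    obtain ⟨i, -, rfl⟩ := mem_image.1 hk
    exact (hmass i).trans (measure_mono (inter_subset_inter_right _ (hball i)))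
  have hparity : ∀ T : Finset ℤ, (∀ k ∈ T, ∀ k' ∈ T, k % 2 = k' % 2) →
      ∑ k ∈ T, volume (U ∩ I k) ≤ volume U := by
    intro T hT
    rw [← measure_biUnion_finset _ fun k _ => hU.inter measurableSet_Ico]
    · exact measure_mono (iUnion₂_subset fun _ _ => inter_subset_left)
    · exact fun k hk k' hk' hne => (disjoint_Ico_of_emod_two_eq hδ hne (hT k hk k' hk')).mono
        inter_subset_right inter_subset_right
  calc #S * ℓ = ∑ k ∈ S, ℓ := by rw [sum_const, nsmul_eq_mul]
    _ ≤ ∑ k ∈ S, volume (U ∩ I k) := sum_le_sum hmassS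
    _ = ∑ k ∈ S with k % 2 = 0, volume (U ∩ I k) + ∑ k ∈ S with ¬k % 2 = 0, volume (U ∩ I k) :=
      (sum_filter_add_sum_filter_not _ _ _).symm
    _ ≤ volume U + volume U := by
      gcongr <;> refine hparity _ fun k hk k' hk' => ?_ <;>
        simp only [mem_filter] at hk hk' <;> omega
    _ = 2 * volume U := (two_mul _).symm

open Finset in
theorem card_sq_mul_le_two_mul_card_mul_volume {ι : Type*} [Fintype ι] (z : ι → ℝ) {δ : ℝ}
    (hδ : 0 < δ) {U : Set ℝ} (hU : MeasurableSet U) {ℓ : ℝ≥0∞}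
    (hmass : ∀ i, ℓ ≤ volume (U ∩ Metric.closedBall (z i) δ)) :
    (Fintype.card ι ^ 2 : ℝ≥0∞) * ℓ ≤
      2 * #{p : ι × ι | |z p.1 - z p.2| ≤ 2 * δ} * volume U := by
  set f : ι → ℤ := fun i => ⌊z i / (2 * δ)⌋
  have hcoll : #{p : ι × ι | f p.1 = f p.2} ≤ #{p : ι × ι | |z p.1 - z p.2| ≤ 2 * δ} := by
    refine card_le_card fun p hp => ?_
    simp only [mem_filter, Finset.mem_univ, true_and] at hp ⊢
    have := Int.abs_sub_lt_one_of_floor_eq_floor hp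
    rw [← sub_div, abs_div, abs_of_pos (by positivity : 0 < 2 * δ),
      div_lt_one (by positivity)] at this
    exact this.le
  have hcard : Fintype.card ι ^ 2 ≤
      #{p : ι × ι | |z p.1 - z p.2| ≤ 2 * δ} * #(Finset.univ.image f) := by
    rw [mul_comm]
    exact (card_sq_le_card_image_mul_card_filter_eq f).trans (Nat.mul_le_mul_left _ hcoll)
  calc (Fintype.card ι ^ 2 : ℝ≥0∞) * ℓ
      ≤ #{p : ι × ι | |z p.1 - z p.2| ≤ 2 * δ} * (#(Finset.univ.image f) * ℓ) := by
        rw [← mul_assoc]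
        gcongr
        exact_mod_cast hcard
    _ ≤ #{p : ι × ι | |z p.1 - z p.2| ≤ 2 * δ} * (2 * volume U) :=
        mul_le_mul_right (card_image_floor_mul_le_two_mul_volume z hδ hU hmass) _
    _ = 2 * #{p : ι × ι | |z p.1 - z p.2| ≤ 2 * δ} * volume U := by ring

theorem dist_le_of_abs_sin_sub_le {θ c ε : ℝ} (h : |sin (θ - c)| ≤ ε) :
    dist θ (c + round ((θ - c) / π) * π) ≤ π * ε / 2 := by
  have hπ := pi_pos
  set m := round ((θ - c) / π)
  have ht : |θ - (c + m * π)| ≤ π / 2 := by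
    have := abs_sub_round ((θ - c) / π)
    calc |θ - (c + m * π)| = π * |(θ - c) / π - m| := by
          rw [← abs_of_pos hπ, ← abs_mul, abs_of_pos hπ]
          congr 1
          field_simp
          ring
      _ ≤ π / 2 := by nlinarith
  have hsin : |sin (θ - (c + m * π))| = |sin (θ - c)| := by
    rw [show θ - (c + m * π) = θ - c - m * π by ring, sin_sub_int_mul_pi, abs_mul,
      abs_neg_one_zpow, one_mul]
  have hJordan := (mul_abs_le_abs_sin ht).trans (hsin.trans_le h)
  rw [div_mul_eq_mul_div, div_le_iff₀ hπ] at hJordan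
  rw [Real.dist_eq]
  linarith

theorem volume_abs_sin_sub_le (c ε : ℝ) :
    volume {θ ∈ Ico 0 π | |sin (θ - c)| ≤ ε} ≤ ENNReal.ofReal (2 * π * ε) := by
  have hπ := pi_pos
  have hround : Monotone (round : ℝ → ℤ) := fun x y h => by
    simpa only [round_eq] using Int.floor_le_floor (by linarith)
  set m₀ := round (-c / π)
  have hsub : {θ ∈ Ico 0 π | |sin (θ - c)| ≤ ε} ⊆
      Metric.closedBall (c + m₀ * π) (π * ε / 2) ∪
        Metric.closedBall (c + (m₀ + 1 : ℤ) * π) (π * ε / 2) := by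
    rintro θ ⟨⟨hθ0, hθπ⟩, hθ⟩
    have hm₀ : m₀ ≤ round ((θ - c) / π) :=
      hround (by rw [sub_div, neg_div]; linarith [div_nonneg hθ0 hπ.le])
    have hm₁ : round ((θ - c) / π) ≤ m₀ + 1 := by
      rw [← round_add_one]
      refine hround ?_
      rw [sub_div, neg_div]
      linarith [(div_le_one hπ).2 hθπ.le]
    rcases hm₀.eq_or_lt with h | h
    · exact Or.inl (by rw [Metric.mem_closedBall, h]; exact dist_le_of_abs_sin_sub_le hθ)
    · exact Or.inr (by
        rw [Metric.mem_closedBall, show m₀ + 1 = round ((θ - c) / π) by omega]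
        exact dist_le_of_abs_sin_sub_le hθ)
  calc volume {θ ∈ Ico 0 π | |sin (θ - c)| ≤ ε}
      ≤ volume (Metric.closedBall (c + m₀ * π) (π * ε / 2) ∪
          Metric.closedBall (c + (m₀ + 1 : ℤ) * π) (π * ε / 2)) := measure_mono hsub
    _ ≤ volume (Metric.closedBall (c + m₀ * π) (π * ε / 2)) +
          volume (Metric.closedBall (c + (m₀ + 1 : ℤ) * π) (π * ε / 2)) := measure_union_le _ _
    _ = ENNReal.ofReal (2 * π * ε) := by
      rw [Real.volume_closedBall, Real.volume_closedBall, ← two_mul, ← ENNReal.ofReal_ofNat 2,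
        ← ENNReal.ofReal_mul zero_le_two]
      ring_nf

theorem volume_abs_projAngle_le {w : ℝ × ℝ} (hw : w ≠ 0) {s : ℝ} (hs : 0 ≤ s) :
    volume {θ ∈ Ico 0 π | |projAngle θ w| ≤ s} ≤ ENNReal.ofReal (2 * π * s / ‖w‖) := by
  set z : ℂ := ⟨w.2, w.1⟩
  have hz : z ≠ 0 := fun h => hw (Prod.ext (congrArg Complex.im h) (congrArg Complex.re h))
  have hR : 0 < ‖z‖ := norm_pos_iff.2 hz
  have hwR : ‖w‖ ≤ ‖z‖ := by
    rw [Prod.norm_def]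
    exact max_le (Complex.abs_im_le_norm z) (Complex.abs_re_le_norm z)
  have hproj : ∀ θ, projAngle θ w = ‖z‖ * sin (θ - -Complex.arg z) := by
    intro θ
    rw [sub_neg_eq_add, sin_add, Complex.cos_arg hz, Complex.sin_arg, projAngle]
    field_simp
    ring
  calc volume {θ ∈ Ico 0 π | |projAngle θ w| ≤ s}
      = volume {θ ∈ Ico 0 π | |sin (θ - -Complex.arg z)| ≤ s / ‖z‖} := by
        simp only [hproj, abs_mul, abs_norm, le_div_iff₀ hR, mul_comm ‖z‖]
    _ ≤ ENNReal.ofReal (2 * π * (s / ‖z‖)) := volume_abs_sin_sub_le _ _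
    _ ≤ ENNReal.ofReal (2 * π * s / ‖w‖) := by
      rw [← mul_div_assoc]
      gcongr

open Finset in
theorem sum_Ioi_pow_le_of_lt_one {n : ℕ} {q : ℝ} (hq0 : 0 ≤ q) (hq1 : q < 1) (k : Fin n) :
    ∑ j ∈ Finset.Ioi k, q ^ (j : ℕ) ≤ q ^ ((k : ℕ) + 1) / (1 - q) := by
  calc ∑ j ∈ Finset.Ioi k, q ^ (j : ℕ) = ∑ m ∈ (Finset.Ioi k).map Fin.valEmbedding, q ^ m :=
        (sum_map (Finset.Ioi k) Fin.valEmbedding fun m => q ^ m).symm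
    _ = ∑ m ∈ Finset.Ico ((k : ℕ) + 1) n, q ^ m := by
        rw [Fin.map_valEmbedding_Ioi, Finset.Ico_add_one_left_eq_Ioo]
    _ ≤ q ^ ((k : ℕ) + 1) / (1 - q) := geom_sum_Ico_le_of_lt_one hq0 hq1

theorem cantorX_eq_sum_inv_pow {n : ℕ} (a : Fin n → Bool) :
    cantorX a = ∑ j, dig (a j) * 4⁻¹ ^ ((j : ℕ) + 1) := by
  refine Finset.sum_congr rfl fun j _ => ?_
  rw [show (-((j : ℕ) + 1) : ℤ) = -(((j : ℕ) + 1 : ℕ) : ℤ) by push_cast; ring, zpow_neg,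
    zpow_natCast, inv_pow]

theorem abs_dig_sub_dig (x y : Bool) : |dig x - dig y| = if x = y then 0 else 3 := by
  cases x <;> cases y <;> norm_num [dig]

open Finset in
theorem two_mul_le_abs_cantorX_sub {n : ℕ} {a a' : Fin n → Bool} {k : Fin n}
    (hlt : ∀ j < k, a j = a' j) (hk : a k ≠ a' k) :
    2 * 4⁻¹ ^ ((k : ℕ) + 1) ≤ |cantorX a - cantorX a'| := by
  set d : Fin n → ℝ := fun j => (dig (a j) - dig (a' j)) * 4⁻¹ ^ ((j : ℕ) + 1)
  have hd : ∀ j, |d j| ≤ 3 * 4⁻¹ ^ ((j : ℕ) + 1) := fun j => by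
    rw [abs_mul, abs_dig_sub_dig, abs_of_pos (by positivity)]
    split_ifs <;> linarith [pow_pos (by norm_num : (0 : ℝ) < 4⁻¹) ((j : ℕ) + 1)]
  have hdk : |d k| = 3 * 4⁻¹ ^ ((k : ℕ) + 1) := by
    rw [abs_mul, abs_dig_sub_dig, if_neg hk, abs_of_pos (by positivity)]
  have hsplit : cantorX a - cantorX a' = d k + ∑ j ∈ Finset.Ioi k, d j := by
    have : cantorX a - cantorX a' = ∑ j, d j := by
      rw [cantorX_eq_sum_inv_pow, cantorX_eq_sum_inv_pow, ← sum_sub_distrib]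
      exact sum_congr rfl fun j _ => (sub_mul _ _ _).symm
    rw [this, ← sum_subset (subset_univ (Finset.Ici k)), ← Finset.Ioi_insert,
      sum_insert Finset.notMem_Ioi_self]
    intro j _ hj
    simp only [d, hlt j (by simpa using hj), sub_self, zero_mul]
  have htail : |∑ j ∈ Finset.Ioi k, d j| ≤ 4⁻¹ ^ ((k : ℕ) + 1) :=
    calc |∑ j ∈ Finset.Ioi k, d j| ≤ ∑ j ∈ Finset.Ioi k, 3 * 4⁻¹ ^ ((j : ℕ) + 1) :=
          (abs_sum_le_sum_abs _ _).trans (sum_le_sum fun j _ => hd j)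
      _ = 3 * 4⁻¹ * ∑ j ∈ Finset.Ioi k, (4⁻¹ : ℝ) ^ (j : ℕ) := by
          rw [mul_sum]; exact sum_congr rfl fun j _ => by ring
      _ ≤ 3 * 4⁻¹ * (4⁻¹ ^ ((k : ℕ) + 1) / (1 - 4⁻¹)) := by
          gcongr; exact sum_Ioi_pow_le_of_lt_one (by norm_num) (by norm_num) k
      _ = 4⁻¹ ^ ((k : ℕ) + 1) := by ring
  have := abs_sub_abs_le_abs_sub (d k) (-∑ j ∈ Finset.Ioi k, d j)
  rw [abs_neg, sub_neg_eq_add, ← hsplit] at this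
  linarith

theorem projAngle_sub (θ : ℝ) (p q : ℝ × ℝ) :
    projAngle θ (p - q) = projAngle θ p - projAngle θ q := by
  simp only [projAngle, Prod.fst_sub, Prod.snd_sub]
  ring

theorem continuous_projAngle (θ : ℝ) : Continuous (projAngle θ) := by
  unfold projAngle
  fun_prop

theorem continuous_projAngle_left (p : ℝ × ℝ) : Continuous fun θ => projAngle θ p := by
  unfold projAngle
  fun_prop

theorem uIcc_subset_projAngle_image {E : Set (ℝ × ℝ)} {p q : ℝ × ℝ} (h : segment ℝ p q ⊆ E)
    (θ : ℝ) : uIcc (projAngle θ p) (projAngle θ q) ⊆ projAngle θ '' E :=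
  (((convex_segment p q).isPreconnected.image _
    (continuous_projAngle θ).continuousOn).ordConnected.uIcc_subset
      (mem_image_of_mem _ (left_mem_segment ℝ p q))
      (mem_image_of_mem _ (right_mem_segment ℝ p q))).trans (image_mono h)

theorem isCompact_cantorK (n : ℕ) : IsCompact (cantorK n) :=
  (isCompact_iUnion fun _ => isCompact_Icc).prod (isCompact_iUnion fun _ => isCompact_Icc)

theorem cantorSq_subset_cantorK {n : ℕ} (a b : Fin n → Bool) : cantorSq a b ⊆ cantorK n :=
  prod_mono (subset_iUnion_of_subset a subset_rfl) (subset_iUnion_of_subset b subset_rfl)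

/-- The lower left corner `(x_a, x_b)` of the square `Q_{a,b}`, with the two words zipped into
one word over `{0,3}²`. -/
noncomputable def cantorCorner {n : ℕ} (u : Fin n → Bool × Bool) : ℝ × ℝ :=
  (cantorX (Prod.fst ∘ u), cantorX (Prod.snd ∘ u))

theorem two_mul_le_norm_cantorCorner_sub {n : ℕ} {u v : Fin n → Bool × Bool} {k : Fin n}
    (hlt : ∀ j < k, u j = v j) (hk : u k ≠ v k) :
    2 * 4⁻¹ ^ ((k : ℕ) + 1) ≤ ‖cantorCorner u - cantorCorner v‖ := by
  simp only [cantorCorner, Prod.norm_def, Prod.fst_sub, Prod.snd_sub, Real.norm_eq_abs]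
  by_cases h : (u k).1 = (v k).1
  · exact le_max_of_le_right (two_mul_le_abs_cantorX_sub
      (fun j hj => congrArg Prod.snd (hlt j hj)) fun h' => hk (Prod.ext h h'))
  · exact le_max_of_le_left (two_mul_le_abs_cantorX_sub
      (fun j hj => congrArg Prod.fst (hlt j hj)) h)

theorem ofReal_mul_abs_le_volume_inter_closedBall {U : Set ℝ} {z δ e : ℝ} (hδ : 0 ≤ δ)
    (he : |e| ≤ 1) (h : uIcc z (z + δ * e) ⊆ U) :
    ENNReal.ofReal (δ * |e|) ≤ volume (U ∩ Metric.closedBall z δ) := by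
  refine le_trans ?_ (measure_mono (subset_inter h ?_))
  · rw [Real.volume_interval, add_sub_cancel_left, abs_mul, abs_of_nonneg hδ]
  · rw [Real.closedBall_eq_Icc]
    have := abs_le.1 he
    exact uIcc_subset_Icc ⟨by linarith, by linarith⟩ ⟨by nlinarith, by nlinarith⟩

/-- Through the corner of each square runs a horizontal and a vertical side; whichever of
`|cos θ|`, `|sin θ|` is `≥ 1 / 2` makes the projection of that side an interval of length
`≥ δ / 2`. -/
theorem volume_projAngle_cantorK_inter_closedBall_ge {n : ℕ} (θ : ℝ)
    (u : Fin n → Bool × Bool) :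
    ENNReal.ofReal ((4 : ℝ) ^ (-(n : ℤ)) / 2) ≤
      volume (projAngle θ '' cantorK n ∩
        Metric.closedBall (projAngle θ (cantorCorner u)) ((4 : ℝ) ^ (-(n : ℤ)))) := by
  set δ : ℝ := (4 : ℝ) ^ (-(n : ℤ))
  set c := cantorCorner u
  have hδ : 0 < δ := by positivity
  have hQ : Convex ℝ (cantorSq (Prod.fst ∘ u) (Prod.snd ∘ u)) :=
    (convex_Icc _ _).prod (convex_Icc _ _)
  have hc : c ∈ cantorSq (Prod.fst ∘ u) (Prod.snd ∘ u) :=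
    ⟨⟨le_rfl, by show c.1 ≤ c.1 + δ; linarith⟩, ⟨le_rfl, by show c.2 ≤ c.2 + δ; linarith⟩⟩
  have hside : ∀ q ∈ cantorSq (Prod.fst ∘ u) (Prod.snd ∘ u),
      uIcc (projAngle θ c) (projAngle θ q) ⊆ projAngle θ '' cantorK n := fun q hq =>
    uIcc_subset_projAngle_image ((hQ.segment_subset hc hq).trans (cantorSq_subset_cantorK _ _)) θ
  have hsc := sin_sq_add_cos_sq θ
  obtain ⟨e, he, he', hsub⟩ : ∃ e : ℝ, 1 / 2 ≤ |e| ∧ |e| ≤ 1 ∧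
      uIcc (projAngle θ c) (projAngle θ c + δ * e) ⊆ projAngle θ '' cantorK n := by
    rcases le_total |sin θ| |cos θ| with h | h
    · refine ⟨cos θ, ?_, abs_cos_le_one θ, ?_⟩
      · nlinarith [sq_abs (sin θ), sq_abs (cos θ), abs_nonneg (sin θ)]
      · convert hside (c.1 + δ, c.2)
          ⟨⟨by show c.1 ≤ c.1 + δ; linarith, le_rfl⟩, ⟨le_rfl, by show c.2 ≤ c.2 + δ; linarith⟩⟩
          using 2
        simp only [projAngle]
        ring
    · refine ⟨sin θ, ?_, abs_sin_le_one θ, ?_⟩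
      · nlinarith [sq_abs (sin θ), sq_abs (cos θ), abs_nonneg (cos θ)]
      · convert hside (c.1, c.2 + δ)
          ⟨⟨le_rfl, by show c.1 ≤ c.1 + δ; linarith⟩, ⟨by show c.2 ≤ c.2 + δ; linarith, le_rfl⟩⟩
          using 2
        simp only [projAngle]
        ring
  exact (ENNReal.ofReal_le_ofReal (by nlinarith)).trans
    (ofReal_mul_abs_le_volume_inter_closedBall hδ.le he' hsub)

noncomputable def closePairs (n : ℕ) (θ : ℝ) :
    Finset ((Fin n → Bool × Bool) × (Fin n → Bool × Bool)) :=
  {p | |projAngle θ (cantorCorner p.1) - projAngle θ (cantorCorner p.2)| ≤ 2 * 4 ^ (-(n : ℤ))}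

theorem four_pow_le_card_closePairs_mul_volume (n : ℕ) (θ : ℝ) :
    (4 : ℝ) ^ n ≤ 4 * #(closePairs n θ) * (volume (projAngle θ '' cantorK n)).toReal := by
  have hU := (isCompact_cantorK n).image (continuous_projAngle θ)
  have h := card_sq_mul_le_two_mul_card_mul_volume (fun u => projAngle θ (cantorCorner u))
    (by positivity) hU.measurableSet (volume_projAngle_cantorK_inter_closedBall_ge θ)
  replace h := ENNReal.toReal_mono (by have := (hU.measure_lt_top (μ := volume)).ne; finiteness) h
  have hcard : (Fintype.card (Fin n → Bool × Bool) : ℝ) ^ 2 * 4 ^ (-(n : ℤ)) = 4 ^ n := by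
    simp only [Fintype.card_fun, Fintype.card_prod, Fintype.card_bool, Fintype.card_fin,
      zpow_neg, zpow_natCast]
    field_simp
    norm_num
  simp only [ENNReal.toReal_mul, ENNReal.toReal_pow, ENNReal.toReal_natCast, ENNReal.toReal_ofNat,
    ENNReal.toReal_ofReal (by positivity : (0 : ℝ) ≤ 4 ^ (-(n : ℤ)) / 2)] at h
  rw [closePairs]
  linarith

theorem measurableSet_setOf_mem_closePairs (n : ℕ)
    (p : (Fin n → Bool × Bool) × (Fin n → Bool × Bool)) :
    MeasurableSet {θ | p ∈ closePairs n θ} := by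
  simp only [closePairs, Finset.mem_filter, Finset.mem_univ, true_and]
  exact (isClosed_le ((continuous_projAngle_left _).sub (continuous_projAngle_left _)).abs
    continuous_const).measurableSet

theorem measurable_card_closePairs (n : ℕ) :
    Measurable fun θ => (#(closePairs n θ) : ℝ≥0∞) := by
  simp only [natCast_card_eq_sum_indicator]
  exact Finset.measurable_sum _ fun p _ =>
    measurable_one.indicator (measurableSet_setOf_mem_closePairs n p)

/-- Squares whose words first differ at position `k` have corners at distance `≥ 2 · 4⁻⁽ᵏ⁺¹⁾`,
so they are close only for angles in a set of measure `≤ 2π · 4ᵏ⁺¹⁻ⁿ`. -/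
theorem volume_setOf_mem_closePairs_le {n : ℕ} (u v : Fin n → Bool × Bool) :
    volume ({θ | (u, v) ∈ closePairs n θ} ∩ Ico 0 π) ≤
      ENNReal.ofReal ((if u = v then π else 0) + ∑ k : Fin n,
        if ∀ j < k, u j = v j then 2 * π * 4 ^ (-(n : ℤ)) * 4 ^ ((k : ℕ) + 1) else 0) := by
  have hnn : 0 ≤ ∑ k : Fin n,
      if ∀ j < k, u j = v j then 2 * π * 4 ^ (-(n : ℤ)) * 4 ^ ((k : ℕ) + 1) else 0 :=
    Finset.sum_nonneg fun k _ => by split_ifs <;> positivity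
  by_cases huv : u = v
  · calc volume ({θ | (u, v) ∈ closePairs n θ} ∩ Ico 0 π) ≤ volume (Ico 0 π) :=
          measure_mono inter_subset_right
      _ = ENNReal.ofReal π := by rw [Real.volume_Ico, sub_zero]
      _ ≤ _ := ENNReal.ofReal_le_ofReal (by rw [if_pos huv]; linarith)
  obtain ⟨k, hlt, hk⟩ := exists_forall_lt_eq_and_ne huv
  have hsep := two_mul_le_norm_cantorCorner_sub hlt hk
  have hw : cantorCorner u - cantorCorner v ≠ 0 :=
    norm_pos_iff.1 (lt_of_lt_of_le (by positivity) hsep)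
  have hset : {θ | (u, v) ∈ closePairs n θ} ∩ Ico 0 π =
      {θ ∈ Ico 0 π | |projAngle θ (cantorCorner u - cantorCorner v)| ≤ 2 * 4 ^ (-(n : ℤ))} := by
    ext θ
    simp only [closePairs, projAngle_sub, Finset.mem_filter, Finset.mem_univ, true_and,
      mem_inter_iff, mem_ofPred_eq]
    exact and_comm
  calc volume ({θ | (u, v) ∈ closePairs n θ} ∩ Ico 0 π)
      ≤ ENNReal.ofReal (2 * π * (2 * 4 ^ (-(n : ℤ))) / ‖cantorCorner u - cantorCorner v‖) :=
        hset ▸ volume_abs_projAngle_le hw (by positivity)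
    _ ≤ ENNReal.ofReal (2 * π * 4 ^ (-(n : ℤ)) * 4 ^ ((k : ℕ) + 1)) := by
        refine ENNReal.ofReal_le_ofReal ((div_le_div_of_nonneg_left (by positivity)
          (by positivity) hsep).trans_eq ?_)
        rw [inv_pow]
        field_simp
    _ ≤ _ := by
        refine ENNReal.ofReal_le_ofReal ?_
        rw [if_neg huv, zero_add]
        refine le_of_eq_of_le ?_ (Finset.single_le_sum (f := fun k : Fin n =>
          if ∀ j < k, u j = v j then 2 * π * 4 ^ (-(n : ℤ)) * 4 ^ ((k : ℕ) + 1) else 0)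
          (fun k _ => by split_ifs <;> positivity) (Finset.mem_univ k))
        rw [if_pos hlt]

open Finset in
theorem lintegral_card_closePairs_le (n : ℕ) :
    ∫⁻ θ in Ico 0 π, (#(closePairs n θ) : ℝ≥0∞) ≤ ENNReal.ofReal (π * (8 * n + 1) * 4 ^ n) := by
  simp only [natCast_card_eq_sum_indicator]
  rw [lintegral_finsetSum _ fun p _ =>
    measurable_one.indicator (measurableSet_setOf_mem_closePairs n p)]
  simp only [lintegral_indicator_one (measurableSet_setOf_mem_closePairs n _),
    Measure.restrict_apply (measurableSet_setOf_mem_closePairs n _)]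
  refine (sum_le_sum fun p _ => volume_setOf_mem_closePairs_le p.1 p.2).trans ?_
  rw [← ENNReal.ofReal_sum_of_nonneg fun p _ => add_nonneg (by split_ifs <;> positivity)
    (sum_nonneg fun k _ => by split_ifs <;> positivity)]
  refine ENNReal.ofReal_le_ofReal (le_of_eq ?_)
  rw [Fintype.sum_prod_type]
  have hpair : ∀ u : Fin n → Bool × Bool, ∑ v : Fin n → Bool × Bool, ∑ k : Fin n,
      (if ∀ j < k, u j = v j then 2 * π * 4 ^ (-(n : ℤ)) * 4 ^ ((k : ℕ) + 1) else 0) =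
        8 * π * n := by
    intro u
    rw [sum_comm]
    calc _ = ∑ _k : Fin n, 8 * π := sum_congr rfl fun k _ => by
            have hk : n - k + (k + 1) = n + 1 := by omega
            rw [← sum_filter, sum_const, nsmul_eq_mul, card_filter_forall_lt_eq,
              Fintype.card_prod, Fintype.card_bool, zpow_neg, zpow_natCast]
            field_simp
            push_cast
            rw [mul_right_comm, ← pow_add, hk, pow_succ]
            ring
      _ = 8 * π * n := by simp only [sum_const, card_univ, Fintype.card_fin, nsmul_eq_mul]; ring
  simp only [sum_add_distrib, sum_ite_eq, Finset.mem_univ, if_true, hpair, sum_const, card_univ,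
    Fintype.card_fun, Fintype.card_prod, Fintype.card_bool, Fintype.card_fin, nsmul_eq_mul]
  push_cast
  ring

theorem ofReal_pi_div_two_le_volume_card_closePairs_lt {n : ℕ} (hn : 1 ≤ n) :
    ENNReal.ofReal (π / 2) ≤
      volume {θ ∈ Ico 0 π | (#(closePairs n θ) : ℝ) < 36 * n * 4 ^ n} := by
  have hT : ((36 * n * 4 ^ n : ℕ) : ℝ≥0∞) ≠ 0 := Nat.cast_ne_zero.2 (by positivity)
  have hmarkov := measure_univ_sub_lintegral_div_le_measure_lt
    (μ := volume.restrict (Ico 0 π)) (measurable_card_closePairs n).aemeasurable hT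
    (ENNReal.natCast_ne_top _)
  rw [Measure.restrict_apply_univ, Real.volume_Ico, sub_zero,
    Measure.restrict_apply' measurableSet_Ico] at hmarkov
  have hint : (∫⁻ θ in Ico 0 π, (#(closePairs n θ) : ℝ≥0∞)) / (36 * n * 4 ^ n : ℕ) ≤
      ENNReal.ofReal (π / 4) := by
    refine ENNReal.div_le_of_le_mul ((lintegral_card_closePairs_le n).trans ?_)
    rw [← ENNReal.ofReal_natCast, ← ENNReal.ofReal_mul (by positivity)]
    refine ENNReal.ofReal_le_ofReal ?_
    have : (1 : ℝ) ≤ n := by exact_mod_cast hn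
    push_cast
    nlinarith [mul_nonneg (mul_pos pi_pos (pow_pos (by norm_num : (0 : ℝ) < 4) n)).le
      (sub_nonneg.2 this)]
  calc ENNReal.ofReal (π / 2) ≤ ENNReal.ofReal π - ENNReal.ofReal (π / 4) := by
        rw [← ENNReal.ofReal_sub _ (by positivity)]
        exact ENNReal.ofReal_le_ofReal (by linarith [pi_pos])
    _ ≤ _ := (tsub_le_tsub_left hint _).trans hmarkov
    _ ≤ _ := by
      refine measure_mono ?_
      rintro θ ⟨hlt, hθ⟩
      exact ⟨hθ, by exact_mod_cast hlt⟩

/-- There exists `c > 0` such that for every `n ≥ 1`, the set of angles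
`θ ∈ [0, π)` with `|proj_θ(K_n)| ≥ c / n` has Lebesgue measure at least `π / 2`:
the median of the projection length is at least `c / n`. -/
theorem median_projection_cantorK_ge : ∃ c : ℝ, 0 < c ∧ ∀ n : ℕ, 1 ≤ n →
    ENNReal.ofReal (π / 2) ≤
      volume {θ ∈ Ico (0 : ℝ) π |
        c / n ≤ (volume (projAngle θ '' cantorK n)).toReal} := by
  refine ⟨1 / 144, by norm_num, fun n hn => ?_⟩
  refine (ofReal_pi_div_two_le_volume_card_closePairs_lt hn).trans (measure_mono ?_)
  rintro θ ⟨hθ, hQ⟩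
  refine ⟨hθ, ?_⟩
  have hV := four_pow_le_card_closePairs_mul_volume n θ
  have hV0 := (volume (projAngle θ '' cantorK n)).toReal_nonneg
  have hn0 : (0 : ℝ) < n := by exact_mod_cast hn
  rw [div_div, div_le_iff₀ (by positivity)]
  nlinarith [mul_le_mul_of_nonneg_right hQ.le hV0, pow_pos (by norm_num : (0 : ℝ) < 4) n]
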